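/- Let W_0 and W_1 be process matrices in W^{A≺B} (process matrices representing quantum combs with order A≺B). Then the optimal success probability over non-signaling discrimination strategies equals the optimal success probability over adaptive testers: p_succ(W_0, W_1) = p_adapt(W_0, W_1). -/

import Mathlib

open scoped ComplexOrder Matrix

namespace ProcessMatrices

/-- The trace norm (sum of singular values) of a complex square matrix. -/
noncomputable def traceNorm {n : Type} [Fintype n] [DecidableEq n] (X : Matrix n n ℂ) : ℝ :=
  ∑ i, Real.sqrt ((Matrix.posSemidef_conjTranspose_mul_self X).isHermitian.eigenvalues i)

variable {aI aO bI bO : Type} [Fintype aI] [Fintype aO] [Fintype bI] [Fintype bO]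
  [DecidableEq aI] [DecidableEq aO] [DecidableEq bI] [DecidableEq bO]
  [Nonempty aI] [Nonempty aO] [Nonempty bI] [Nonempty bO]

/-- `_{A_O} W = (1_{A_O}/dim A_O) ⊗ tr_{A_O} W`, as an operator on the full space. -/
noncomputable def rAO (W : Matrix (aI × aO × bI × bO) (aI × aO × bI × bO) ℂ) :
    Matrix (aI × aO × bI × bO) (aI × aO × bI × bO) ℂ := fun i j =>
  (if i.2.1 = j.2.1 then ((Fintype.card aO : ℂ))⁻¹ else 0) *
    ∑ k : aO, W (i.1, k, i.2.2.1, i.2.2.2) (j.1, k, j.2.2.1, j.2.2.2)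

/-- `_{B_O} W`. -/
noncomputable def rBO (W : Matrix (aI × aO × bI × bO) (aI × aO × bI × bO) ℂ) :
    Matrix (aI × aO × bI × bO) (aI × aO × bI × bO) ℂ := fun i j =>
  (if i.2.2.2 = j.2.2.2 then ((Fintype.card bO : ℂ))⁻¹ else 0) *
    ∑ k : bO, W (i.1, i.2.1, i.2.2.1, k) (j.1, j.2.1, j.2.2.1, k)

/-- `_{A_O B_O} W`. -/
noncomputable def rAOBO (W : Matrix (aI × aO × bI × bO) (aI × aO × bI × bO) ℂ) :
    Matrix (aI × aO × bI × bO) (aI × aO × bI × bO) ℂ := fun i j =>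
  (if i.2.1 = j.2.1 ∧ i.2.2.2 = j.2.2.2 then
      ((Fintype.card aO : ℂ) * (Fintype.card bO : ℂ))⁻¹ else 0) *
    ∑ k : aO, ∑ l : bO, W (i.1, k, i.2.2.1, l) (j.1, k, j.2.2.1, l)

/-- `_{A_I A_O} W`. -/
noncomputable def rAIAO (W : Matrix (aI × aO × bI × bO) (aI × aO × bI × bO) ℂ) :
    Matrix (aI × aO × bI × bO) (aI × aO × bI × bO) ℂ := fun i j =>
  (if i.1 = j.1 ∧ i.2.1 = j.2.1 then
      ((Fintype.card aI : ℂ) * (Fintype.card aO : ℂ))⁻¹ else 0) *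
    ∑ k : aI, ∑ l : aO, W (k, l, i.2.2.1, i.2.2.2) (k, l, j.2.2.1, j.2.2.2)

/-- `_{B_I B_O} W`. -/
noncomputable def rBIBO (W : Matrix (aI × aO × bI × bO) (aI × aO × bI × bO) ℂ) :
    Matrix (aI × aO × bI × bO) (aI × aO × bI × bO) ℂ := fun i j =>
  (if i.2.2.1 = j.2.2.1 ∧ i.2.2.2 = j.2.2.2 then
      ((Fintype.card bI : ℂ) * (Fintype.card bO : ℂ))⁻¹ else 0) *
    ∑ k : bI, ∑ l : bO, W (i.1, i.2.1, k, l) (j.1, j.2.1, k, l)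

/-- `_{A_I A_O B_O} W`. -/
noncomputable def rAIAOBO (W : Matrix (aI × aO × bI × bO) (aI × aO × bI × bO) ℂ) :
    Matrix (aI × aO × bI × bO) (aI × aO × bI × bO) ℂ := fun i j =>
  (if i.1 = j.1 ∧ i.2.1 = j.2.1 ∧ i.2.2.2 = j.2.2.2 then
      ((Fintype.card aI : ℂ) * (Fintype.card aO : ℂ) * (Fintype.card bO : ℂ))⁻¹ else 0) *
    ∑ k : aI, ∑ l : aO, ∑ m : bO, W (k, l, i.2.2.1, m) (k, l, j.2.2.1, m)

/-- `_{A_O B_I B_O} W`. -/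
noncomputable def rAOBIBO (W : Matrix (aI × aO × bI × bO) (aI × aO × bI × bO) ℂ) :
    Matrix (aI × aO × bI × bO) (aI × aO × bI × bO) ℂ := fun i j =>
  (if i.2.1 = j.2.1 ∧ i.2.2.1 = j.2.2.1 ∧ i.2.2.2 = j.2.2.2 then
      ((Fintype.card aO : ℂ) * (Fintype.card bI : ℂ) * (Fintype.card bO : ℂ))⁻¹ else 0) *
    ∑ k : aO, ∑ l : bI, ∑ m : bO, W (i.1, k, l, m) (j.1, k, l, m)

/-- `W` is a process matrix. -/
structure IsProcessMatrix (W : Matrix (aI × aO × bI × bO) (aI × aO × bI × bO) ℂ) : Prop where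
  posSemidef : W.PosSemidef
  condA : rAIAO W = rAIAOBO W
  condB : rBIBO W = rAOBIBO W
  condAB : W = rBO W + rAO W - rAOBO W
  traceEq : W.trace = (Fintype.card aO : ℂ) * (Fintype.card bO : ℂ)

/-- Partial trace over `A_O`. -/
noncomputable def ptrAO (N : Matrix (aI × aO × bI × bO) (aI × aO × bI × bO) ℂ) :
    Matrix (aI × bI × bO) (aI × bI × bO) ℂ := fun i j =>
  ∑ k : aO, N (i.1, k, i.2.1, i.2.2) (j.1, k, j.2.1, j.2.2)

/-- Partial trace over `B_O`. -/
noncomputable def ptrBO (N : Matrix (aI × aO × bI × bO) (aI × aO × bI × bO) ℂ) :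
    Matrix (aI × aO × bI) (aI × aO × bI) ℂ := fun i j =>
  ∑ k : bO, N (i.1, i.2.1, i.2.2, k) (j.1, j.2.1, j.2.2, k)

/-- Partial trace over `A_O ⊗ B_O`. -/
noncomputable def ptrAOBO (N : Matrix (aI × aO × bI × bO) (aI × aO × bI × bO) ℂ) :
    Matrix (aI × bI) (aI × bI) ℂ := fun i j =>
  ∑ k : aO, ∑ l : bO, N (i.1, k, i.2, l) (j.1, k, j.2, l)

/-- `N` is the Choi matrix of a non-signaling channel. -/
structure MemNS (N : Matrix (aI × aO × bI × bO) (aI × aO × bI × bO) ℂ) : Prop where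
  posSemidef : N.PosSemidef
  trChannel : ptrAOBO N = 1
  nsA : ∀ i j : aI × bI × bO, ptrAO N i j =
    (if i.1 = j.1 then ((Fintype.card aI : ℂ))⁻¹ else 0) *
      ∑ m : aI, ptrAO N (m, i.2.1, i.2.2) (m, j.2.1, j.2.2)
  nsB : ∀ i j : aI × aO × bI, ptrBO N i j =
    (if i.2.2 = j.2.2 then ((Fintype.card bI : ℂ))⁻¹ else 0) *
      ∑ m : bI, ptrBO N (i.1, i.2.1, m) (j.1, j.2.1, m)

/-- The positive semidefinite square root, as `Matrix.PosSemidef.sqrt` was defined in older Mathlib. -/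
noncomputable def psdSqrt {n 𝕜 : Type*} [Fintype n] [DecidableEq n] [RCLike 𝕜] {A : Matrix n n 𝕜}
    (hA : A.PosSemidef) : Matrix n n 𝕜 :=
  hA.1.eigenvectorUnitary.1 * Matrix.diagonal ((↑) ∘ (√·) ∘ hA.1.eigenvalues) *
    (star hA.1.eigenvectorUnitary : Matrix n n 𝕜)

/-- `sup { ‖√N (W₀ - W₁) √N‖₁ : N ∈ NS }`. -/
noncomputable def discrBound (W0 W1 : Matrix (aI × aO × bI × bO) (aI × aO × bI × bO) ℂ) : ℝ :=
  sSup { x : ℝ | ∃ N : Matrix (aI × aO × bI × bO) (aI × aO × bI × bO) ℂ, ∃ hN : MemNS N,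
    x = traceNorm (psdSqrt hN.posSemidef * (W0 - W1) * psdSqrt hN.posSemidef) }

/-- The optimal probability of discriminating the process matrices `W0` and `W1`
over non-signaling strategies. -/
noncomputable def pSucc (W0 W1 : Matrix (aI × aO × bI × bO) (aI × aO × bI × bO) ℂ) : ℝ :=
  (1/2) * sSup { x : ℝ | ∃ S0 S1 : Matrix (aI × aO × bI × bO) (aI × aO × bI × bO) ℂ,
    S0.PosSemidef ∧ S1.PosSemidef ∧ MemNS (S0 + S1) ∧
    x = ((W0 * S0).trace + (W1 * S1).trace).re }

/-- `W` is a process matrix representing a quantum comb with causal order `A ≺ B`: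
`W = W' ⊗ 1_{B_O}` with `tr_{B_I} W' = W'' ⊗ 1_{A_O}`. -/
def MemCombAB (W : Matrix (aI × aO × bI × bO) (aI × aO × bI × bO) ℂ) : Prop :=
  IsProcessMatrix W ∧
  ∃ W' : Matrix (aI × aO × bI) (aI × aO × bI) ℂ,
    (∀ i j, W i j = (if i.2.2.2 = j.2.2.2 then 1 else 0) *
        W' (i.1, i.2.1, i.2.2.1) (j.1, j.2.1, j.2.2.1)) ∧
    ∃ W'' : Matrix aI aI ℂ, ∀ p q : aI × aO,
      (∑ k : bI, W' (p.1, p.2, k) (q.1, q.2, k)) = (if p.2 = q.2 then 1 else 0) * W'' p.1 q.1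

/-- `W` is a process matrix representing a quantum comb with causal order `B ≺ A`:
`W = W' ⊗ 1_{A_O}` (in the `A_O` slot) with `tr_{A_I} W' = W'' ⊗ 1_{B_O}`. -/
def MemCombBA (W : Matrix (aI × aO × bI × bO) (aI × aO × bI × bO) ℂ) : Prop :=
  IsProcessMatrix W ∧
  ∃ W' : Matrix (aI × bI × bO) (aI × bI × bO) ℂ,
    (∀ i j, W i j = (if i.2.1 = j.2.1 then 1 else 0) *
        W' (i.1, i.2.2.1, i.2.2.2) (j.1, j.2.2.1, j.2.2.2)) ∧
    ∃ W'' : Matrix bI bI ℂ, ∀ p q : bI × bO,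
      (∑ k : aI, W' (k, p.1, p.2) (k, q.1, q.2)) = (if p.2 = q.2 then 1 else 0) * W'' p.1 q.1

/-- `W` is a free process matrix: `W = ρ ⊗ 1_{A_O ⊗ B_O}` for a density operator `ρ`. -/
def MemFree (W : Matrix (aI × aO × bI × bO) (aI × aO × bI × bO) ℂ) : Prop :=
  ∃ ρ : Matrix (aI × bI) (aI × bI) ℂ, ρ.PosSemidef ∧ ρ.trace = 1 ∧
    ∀ i j, W i j = (if i.2.1 = j.2.1 ∧ i.2.2.2 = j.2.2.2 then 1 else 0) *
      ρ (i.1, i.2.2.1) (j.1, j.2.2.1)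

/-- `W` is a causally separable process matrix. -/
def MemSep (W : Matrix (aI × aO × bI × bO) (aI × aO × bI × bO) ℂ) : Prop :=
  ∃ p : ℝ, 0 ≤ p ∧ p ≤ 1 ∧ ∃ W1 W2 : Matrix (aI × aO × bI × bO) (aI × aO × bI × bO) ℂ,
    MemCombAB W1 ∧ MemCombBA W2 ∧ W = (p : ℂ) • W1 + ((1 - p : ℝ) : ℂ) • W2

/-- `(L0, L1)` is an adaptive tester for the causal order `A ≺ B`. -/
structure IsAdaptiveTester (L0 L1 : Matrix (aI × aO × bI × bO) (aI × aO × bI × bO) ℂ) :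
    Prop where
  posSemidef0 : L0.PosSemidef
  posSemidef1 : L1.PosSemidef
  comb : ∃ J : Matrix (aI × aO) (aI × aO) ℂ, J.PosSemidef ∧
    (∀ p q : aI, (∑ k : aO, J (p, k) (q, k)) = if p = q then 1 else 0) ∧
    ∀ i j : aI × aO × bI, ptrBO (L0 + L1) i j =
      (if i.2.2 = j.2.2 then 1 else 0) * J (i.1, i.2.1) (j.1, j.2.1)

/-- The optimal probability of discriminating `W0` and `W1` over adaptive testers. -/
noncomputable def pAdapt (W0 W1 : Matrix (aI × aO × bI × bO) (aI × aO × bI × bO) ℂ) : ℝ :=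
  (1/2) * sSup { x : ℝ | ∃ L0 L1 : Matrix (aI × aO × bI × bO) (aI × aO × bI × bO) ℂ,
    IsAdaptiveTester L0 L1 ∧ x = ((W0 * L0).trace + (W1 * L1).trace).re }

end ProcessMatrices

/-!
A non-signalling strategy `(S₀, S₁)` is already an adaptive tester: no signalling from `B` gives
`tr_{B_O}(S₀ + S₁) = 1_{B_I} ⊗ J` with `J = tr_{B_I B_O}(S₀ + S₁) / d_{B_I}`, and `tr_{A_O} J = 1`
because `S₀ + S₁` is a channel. Conversely, as `Wᵢ = Wᵢ' ⊗ 1_{B_O}`, the success probability only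
sees `tr_{B_O} Lᵢ`, so a tester `(L₀, L₁)` may be replaced by `(_{B_O} L₀, _{B_O} L₁)`; the sum of
these has `B_O`-marginal `1_{B_I} ⊗ J` and `A_O`-marginal proportional to the identity, so it is
non-signalling. Hence both suprema range over the same set of values.
-/

namespace ProcessMatrices

open Matrix

variable {aI aO bI bO : Type}

lemma ptrAOBO_apply [Fintype aO] [Fintype bO]
    (N : Matrix (aI × aO × bI × bO) (aI × aO × bI × bO) ℂ) (i j : aI × bI) :
    ptrAOBO N i j = ∑ k, ptrBO N (i.1, k, i.2) (j.1, k, j.2) :=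
  rfl

lemma rBO_apply [Fintype bO] [DecidableEq bO]
    (N : Matrix (aI × aO × bI × bO) (aI × aO × bI × bO) ℂ) (i j : aI × aO × bI × bO) :
    rBO N i j = (if i.2.2.2 = j.2.2.2 then ((Fintype.card bO : ℂ))⁻¹ else 0) *
      ptrBO N (i.1, i.2.1, i.2.2.1) (j.1, j.2.1, j.2.2.1) :=
  rfl

lemma rBO_add [Fintype bO] [DecidableEq bO]
    (L0 L1 : Matrix (aI × aO × bI × bO) (aI × aO × bI × bO) ℂ) :
    rBO (L0 + L1) = rBO L0 + rBO L1 := by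
  ext i j
  simp [rBO, Finset.sum_add_distrib, mul_add]

lemma posSemidef_ptrBO [Fintype aI] [Fintype aO] [Fintype bI] [Fintype bO]
    {L : Matrix (aI × aO × bI × bO) (aI × aO × bI × bO) ℂ} (hL : L.PosSemidef) :
    (ptrBO L).PosSemidef := by
  have : ptrBO L = ∑ k : bO, L.submatrix (fun p : aI × aO × bI => (p.1, p.2.1, p.2.2, k))
      (fun p => (p.1, p.2.1, p.2.2, k)) := by
    ext i j
    simp [ptrBO, Matrix.sum_apply]
  rw [this]
  exact posSemidef_sum _ fun k _ => hL.submatrix _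

open scoped Kronecker in
lemma rBO_eq_kronecker [Fintype bO] [DecidableEq bO]
    (L : Matrix (aI × aO × bI × bO) (aI × aO × bI × bO) ℂ) :
    rBO L = (ptrBO L ⊗ₖ ((Fintype.card bO : ℂ)⁻¹ • (1 : Matrix bO bO ℂ))).submatrix
      (fun i => ((i.1, i.2.1, i.2.2.1), i.2.2.2)) (fun i => ((i.1, i.2.1, i.2.2.1), i.2.2.2)) := by
  ext i j
  simp [rBO, ptrBO, Matrix.one_apply, mul_comm]

lemma posSemidef_rBO [Fintype aI] [Fintype aO] [Fintype bI] [Fintype bO] [DecidableEq bO]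
    {L : Matrix (aI × aO × bI × bO) (aI × aO × bI × bO) ℂ} (hL : L.PosSemidef) :
    (rBO L).PosSemidef := by
  rw [rBO_eq_kronecker]
  exact ((posSemidef_ptrBO hL).kronecker (PosSemidef.one.smul (by positivity))).submatrix _

lemma ptrBO_rBO [Fintype bO] [DecidableEq bO] [Nonempty bO]
    (L : Matrix (aI × aO × bI × bO) (aI × aO × bI × bO) ℂ) :
    ptrBO (rBO L) = ptrBO L := by
  have hbO : (Fintype.card bO : ℂ) ≠ 0 := Nat.cast_ne_zero.mpr Fintype.card_ne_zero
  ext i j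
  simp [ptrBO, rBO, hbO]

lemma trace_mul_eq_sum_ptrBO [Fintype aI] [Fintype aO] [Fintype bI] [Fintype bO] [DecidableEq bO]
    {W : Matrix (aI × aO × bI × bO) (aI × aO × bI × bO) ℂ}
    {W' : Matrix (aI × aO × bI) (aI × aO × bI) ℂ}
    (hW : ∀ i j, W i j = (if i.2.2.2 = j.2.2.2 then 1 else 0) *
        W' (i.1, i.2.1, i.2.2.1) (j.1, j.2.1, j.2.2.1))
    (S : Matrix (aI × aO × bI × bO) (aI × aO × bI × bO) ℂ) :
    (W * S).trace = ∑ p, ∑ q, W' p q * ptrBO S q p := by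
  simp only [Matrix.trace, Matrix.diag, Matrix.mul_apply, hW, ptrBO, Finset.mul_sum,
    Fintype.sum_prod_type, ite_mul, one_mul, zero_mul, Finset.sum_ite_eq, Finset.mem_univ,
    if_true]
  refine Finset.sum_congr rfl fun _ _ => Finset.sum_congr rfl fun _ _ =>
    Finset.sum_congr rfl fun _ _ => ?_
  exact Finset.sum_comm.trans <| Finset.sum_congr rfl fun _ _ =>
    Finset.sum_comm.trans <| Finset.sum_congr rfl fun _ _ => Finset.sum_comm

lemma trace_mul_rBO [Fintype aI] [Fintype aO] [Fintype bI] [Fintype bO] [DecidableEq bO]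
    [Nonempty bO] {W : Matrix (aI × aO × bI × bO) (aI × aO × bI × bO) ℂ}
    {W' : Matrix (aI × aO × bI) (aI × aO × bI) ℂ}
    (hW : ∀ i j, W i j = (if i.2.2.2 = j.2.2.2 then 1 else 0) *
        W' (i.1, i.2.1, i.2.2.1) (j.1, j.2.1, j.2.2.1))
    (S : Matrix (aI × aO × bI × bO) (aI × aO × bI × bO) ℂ) :
    (W * rBO S).trace = (W * S).trace := by
  rw [trace_mul_eq_sum_ptrBO hW, trace_mul_eq_sum_ptrBO hW, ptrBO_rBO]

lemma ptrAOBO_eq_one_of_ptrBO_eq_tensor [Fintype aO] [Fintype bO] [DecidableEq aI]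
    [DecidableEq bI] {N : Matrix (aI × aO × bI × bO) (aI × aO × bI × bO) ℂ}
    {J : Matrix (aI × aO) (aI × aO) ℂ}
    (hJ : ∀ p q : aI, (∑ k : aO, J (p, k) (q, k)) = if p = q then 1 else 0)
    (hNJ : ∀ i j : aI × aO × bI, ptrBO N i j =
      (if i.2.2 = j.2.2 then 1 else 0) * J (i.1, i.2.1) (j.1, j.2.1)) :
    ptrAOBO N = 1 := by
  ext i j
  simp only [ptrAOBO_apply, hNJ]
  split_ifs with h <;> simp [h, hJ, Matrix.one_apply, Prod.ext_iff]

lemma nsB_of_ptrBO_eq_tensor [Fintype bI] [Fintype bO] [DecidableEq bI] [Nonempty bI]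
    {N : Matrix (aI × aO × bI × bO) (aI × aO × bI × bO) ℂ} {J : Matrix (aI × aO) (aI × aO) ℂ}
    (hNJ : ∀ i j : aI × aO × bI, ptrBO N i j =
      (if i.2.2 = j.2.2 then 1 else 0) * J (i.1, i.2.1) (j.1, j.2.1))
    (i j : aI × aO × bI) :
    ptrBO N i j = (if i.2.2 = j.2.2 then ((Fintype.card bI : ℂ))⁻¹ else 0) *
      ∑ m : bI, ptrBO N (i.1, i.2.1, m) (j.1, j.2.1, m) := by
  have hbI : (Fintype.card bI : ℂ) ≠ 0 := Nat.cast_ne_zero.mpr Fintype.card_ne_zero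
  simp only [hNJ, if_true, one_mul, Finset.sum_const, Finset.card_univ, nsmul_eq_mul]
  split_ifs
  · field_simp
  · simp

lemma ptrAO_rBO_of_ptrBO_eq_tensor [Fintype aO] [Fintype bO] [DecidableEq aI] [DecidableEq bI]
    [DecidableEq bO] {N : Matrix (aI × aO × bI × bO) (aI × aO × bI × bO) ℂ}
    {J : Matrix (aI × aO) (aI × aO) ℂ}
    (hJ : ∀ p q : aI, (∑ k : aO, J (p, k) (q, k)) = if p = q then 1 else 0)
    (hNJ : ∀ i j : aI × aO × bI, ptrBO N i j =
      (if i.2.2 = j.2.2 then 1 else 0) * J (i.1, i.2.1) (j.1, j.2.1)) :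
    ptrAO (rBO N) = ((Fintype.card bO : ℂ))⁻¹ • 1 := by
  ext i j
  simp only [ptrAO, rBO_apply, hNJ]
  split_ifs <;> simp [*, ← Finset.mul_sum, Matrix.one_apply, Prod.ext_iff]

lemma nsA_of_ptrAO_eq_smul_one [Fintype aI] [Fintype aO] [DecidableEq aI] [DecidableEq bI]
    [DecidableEq bO] [Nonempty aI] {N : Matrix (aI × aO × bI × bO) (aI × aO × bI × bO) ℂ}
    {c : ℂ} (hN : ptrAO N = c • 1) (i j : aI × bI × bO) :
    ptrAO N i j = (if i.1 = j.1 then ((Fintype.card aI : ℂ))⁻¹ else 0) *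
      ∑ m : aI, ptrAO N (m, i.2.1, i.2.2) (m, j.2.1, j.2.2) := by
  have haI : (Fintype.card aI : ℂ) ≠ 0 := Nat.cast_ne_zero.mpr Fintype.card_ne_zero
  simp only [hN, Matrix.smul_apply, Matrix.one_apply, Prod.ext_iff]
  split_ifs <;> simp_all

lemma memNS_rBO [Fintype aI] [Fintype aO] [Fintype bI] [Fintype bO] [DecidableEq aI]
    [DecidableEq bI] [DecidableEq bO] [Nonempty aI] [Nonempty bI] [Nonempty bO]
    {L : Matrix (aI × aO × bI × bO) (aI × aO × bI × bO) ℂ} {J : Matrix (aI × aO) (aI × aO) ℂ}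
    (hL : L.PosSemidef)
    (hJ : ∀ p q : aI, (∑ k : aO, J (p, k) (q, k)) = if p = q then 1 else 0)
    (hLJ : ∀ i j : aI × aO × bI, ptrBO L i j =
      (if i.2.2 = j.2.2 then 1 else 0) * J (i.1, i.2.1) (j.1, j.2.1)) :
    MemNS (rBO L) := by
  have hLJ' : ∀ i j : aI × aO × bI, ptrBO (rBO L) i j =
      (if i.2.2 = j.2.2 then 1 else 0) * J (i.1, i.2.1) (j.1, j.2.1) := by
    simpa only [ptrBO_rBO] using hLJ
  exact ⟨posSemidef_rBO hL, ptrAOBO_eq_one_of_ptrBO_eq_tensor hJ hLJ',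
    nsA_of_ptrAO_eq_smul_one (ptrAO_rBO_of_ptrBO_eq_tensor hJ hLJ), nsB_of_ptrBO_eq_tensor hLJ'⟩

lemma exists_ptrBO_eq_tensor_of_memNS [Fintype aI] [Fintype aO] [Fintype bI] [Fintype bO]
    [DecidableEq aI] [DecidableEq bI] [Nonempty bI]
    {N : Matrix (aI × aO × bI × bO) (aI × aO × bI × bO) ℂ} (hN : MemNS N) :
    ∃ J : Matrix (aI × aO) (aI × aO) ℂ, J.PosSemidef ∧
      (∀ p q : aI, (∑ k : aO, J (p, k) (q, k)) = if p = q then 1 else 0) ∧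
      ∀ i j : aI × aO × bI, ptrBO N i j =
        (if i.2.2 = j.2.2 then 1 else 0) * J (i.1, i.2.1) (j.1, j.2.1) := by
  have hbI : (Fintype.card bI : ℂ) ≠ 0 := Nat.cast_ne_zero.mpr Fintype.card_ne_zero
  set J : Matrix (aI × aO) (aI × aO) ℂ := (Fintype.card bI : ℂ)⁻¹ • ∑ m : bI,
    (ptrBO N).submatrix (fun p : aI × aO => (p.1, p.2, m)) (fun p => (p.1, p.2, m)) with hJdef
  have hJpsd : J.PosSemidef :=
    (posSemidef_sum _ fun m _ => (posSemidef_ptrBO hN.posSemidef).submatrix _).smul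
      (by positivity)
  refine ⟨J, hJpsd, fun p q => ?_, fun i j => ?_⟩
  · have hsum := fun m : bI => congrFun (congrFun hN.trChannel (p, m)) (q, m)
    simp only [ptrAOBO_apply] at hsum
    simp only [hJdef, Matrix.smul_apply, Matrix.sum_apply, Matrix.submatrix_apply, smul_eq_mul]
    rw [← Finset.mul_sum, Finset.sum_comm]
    simp [hsum, Matrix.one_apply, hbI]
  · rw [hN.nsB i j]
    simp only [hJdef, Matrix.smul_apply, Matrix.sum_apply, Matrix.submatrix_apply, smul_eq_mul]
    split_ifs <;> ring

lemma isAdaptiveTester_of_memNS [Fintype aI] [Fintype aO] [Fintype bI] [Fintype bO]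
    [DecidableEq aI] [DecidableEq bI] [Nonempty bI]
    {S0 S1 : Matrix (aI × aO × bI × bO) (aI × aO × bI × bO) ℂ}
    (hS0 : S0.PosSemidef) (hS1 : S1.PosSemidef) (hS : MemNS (S0 + S1)) :
    IsAdaptiveTester S0 S1 :=
  ⟨hS0, hS1, exists_ptrBO_eq_tensor_of_memNS hS⟩

theorem statement4_general {aI aO bI bO : Type}
    [Fintype aI] [Fintype aO] [Fintype bI] [Fintype bO]
    [DecidableEq aI] [DecidableEq aO] [DecidableEq bI] [DecidableEq bO]
    [Nonempty aI] [Nonempty bI] [Nonempty bO]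
    (W0 W1 : Matrix (aI × aO × bI × bO) (aI × aO × bI × bO) ℂ)
    (h0 : MemCombAB W0) (h1 : MemCombAB W1) :
    pSucc W0 W1 = pAdapt W0 W1 := by
  obtain ⟨-, W0', hW0, -⟩ := h0
  obtain ⟨-, W1', hW1, -⟩ := h1
  unfold pSucc pAdapt
  congr 2
  ext x
  constructor
  · rintro ⟨S0, S1, hS0, hS1, hS, rfl⟩
    exact ⟨S0, S1, isAdaptiveTester_of_memNS hS0 hS1 hS, rfl⟩
  · rintro ⟨L0, L1, ⟨hL0, hL1, J, -, hJ, hLJ⟩, rfl⟩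
    refine ⟨rBO L0, rBO L1, posSemidef_rBO hL0, posSemidef_rBO hL1, ?_, ?_⟩
    · rw [← rBO_add]
      exact memNS_rBO (hL0.add hL1) hJ hLJ
    · rw [trace_mul_rBO hW0, trace_mul_rBO hW1]

/-- For process matrices representing quantum combs of order `A ≺ B`,
the optimal success probability over non-signaling strategies equals the optimal
success probability over adaptive testers. -/
theorem statement4 {aI aO bI bO : Type}
    [Fintype aI] [Fintype aO] [Fintype bI] [Fintype bO]
    [DecidableEq aI] [DecidableEq aO] [DecidableEq bI] [DecidableEq bO]
    [Nonempty aI] [Nonempty aO] [Nonempty bI] [Nonempty bO]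
    (W0 W1 : Matrix (aI × aO × bI × bO) (aI × aO × bI × bO) ℂ)
    (h0 : MemCombAB W0) (h1 : MemCombAB W1) :
    pSucc W0 W1 = pAdapt W0 W1 :=
  statement4_general W0 W1 h0 h1

end ProcessMatrices
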